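/- Let L : S × S → L(E) be a hermitian kernel and s₀ ∈ S. Then L is conditionally negative definite if and only if the kernel K(s,t) := (1/2)[L(s,s₀) + L(s₀,t) − L(s,t) − L(s₀,s₀)] is positive definite. -/
import Mathlib


/-- A hermitian kernel `L : S × S → L(E)` is conditionally negative definite
iff `K(s,t) := (1/2)[L(s,s₀) + L(s₀,t) − L(s,t) − L(s₀,s₀)]` is positive definite. -/
theorem stmt5 {𝔄 E : Type*} [CStarAlgebra 𝔄] [PartialOrder 𝔄] [StarOrderedRing 𝔄]
    [AddCommGroup E] [Module ℂ E] {S : Type*}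
    (sm : E → 𝔄 → E)                      -- right module action
    (ip : E → E → 𝔄)                      -- 𝔄-valued inner product
    (ip_add_right : ∀ x y z : E, ip x (y + z) = ip x y + ip x z)
    (ip_smul_right : ∀ (x y : E) (a : 𝔄), ip x (sm y a) = ip x y * a)
    (ip_smulC_right : ∀ (c : ℂ) (x y : E), ip x (c • y) = c • ip x y)
    (ip_star : ∀ x y : E, ip y x = star (ip x y))
    (ip_pos : ∀ x : E, 0 ≤ ip x x)
    (L : S → S → E → E)                   -- the kernel, as operators on E
    (hL_lin : ∀ s t, IsLinearMap ℂ (L s t))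
    (hL_herm : ∀ s t x y, ip (L s t x) y = ip x (L t s y))  -- L(t,s) = L(s,t)*
    (s₀ : S)
    (K : S → S → E → E)
    (hK : ∀ s t z, K s t z
        = (1/2 : ℂ) • (L s s₀ z + L s₀ t z - L s t z - L s₀ s₀ z)) :
    -- L conditionally negative definite ↔ K positive definite
    (∀ (n : ℕ), 2 ≤ n → ∀ (s : Fin n → S) (x : Fin n → E), (∑ i, x i) = 0 →
        (∑ i, ∑ j, ip (L (s i) (s j) (x i)) (x j)) ≤ 0)
      ↔ (∀ (n : ℕ), 2 ≤ n → ∀ (s : Fin n → S) (x : Fin n → E),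
          0 ≤ ∑ i, ∑ j, ip (K (s i) (s j) (x i)) (x j)) := by
  -- basic derived facts about ip
  have ipal : ∀ x y z : E, ip (x + y) z = ip x z + ip y z := by
    intro x y z
    rw [ip_star z (x + y), ip_add_right, star_add, ← ip_star z x, ← ip_star z y]
  have ip0r : ∀ x : E, ip x 0 = 0 := by
    intro x
    have h : ip x 0 + 0 = ip x 0 + ip x 0 := by
      simpa using (ip_add_right x 0 0).symm
    exact (add_left_cancel h).symm
  have ip0l : ∀ x : E, ip 0 x = 0 := by
    intro x
    rw [ip_star x 0, ip0r, star_zero]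
  have ipnr : ∀ x y : E, ip x (-y) = -ip x y := by
    intro x y
    have h : ip x (-y) + ip x y = 0 := by
      rw [← ip_add_right, neg_add_cancel, ip0r]
    exact eq_neg_of_add_eq_zero_left h
  have ipnl : ∀ x y : E, ip (-x) y = -ip x y := by
    intro x y
    rw [ip_star y (-x), ipnr, star_neg, ← ip_star y x]
  have ipsr : ∀ {m : ℕ} (y : E) (f : Fin m → E),
      ip y (∑ i, f i) = ∑ i, ip y (f i) := by
    intro m y f
    exact map_sum (AddMonoidHom.mk' (ip y) (fun a b => ip_add_right y a b)) f Finset.univ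
  have ipsl : ∀ {m : ℕ} (f : Fin m → E) (z : E),
      ip (∑ i, f i) z = ∑ i, ip (f i) z := by
    intro m f z
    exact map_sum (AddMonoidHom.mk' (fun w => ip w z) (fun a b => ipal a b z)) f Finset.univ
  have ipsubl : ∀ x y z : E, ip (x - y) z = ip x z - ip y z := by
    intro x y z
    rw [sub_eq_add_neg, ipal, ipnl, sub_eq_add_neg]
  have ipsml : ∀ (c : ℂ) (x y : E), ip (c • x) y = star c • ip x y := by
    intro c x y
    rw [ip_star y (c • x), ip_smulC_right, star_smul, ← ip_star y x]
  -- facts about L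
  have Lzero : ∀ a b, L a b 0 = 0 := fun a b => (hL_lin a b).map_zero
  have Lneg : ∀ a b (y : E), L a b (-y) = -L a b y := fun a b y => (hL_lin a b).map_neg y
  have Lsum : ∀ a b {m : ℕ} (f : Fin m → E), L a b (∑ i, f i) = ∑ i, L a b (f i) := by
    intro a b m f
    exact map_sum (IsLinearMap.mk' (L a b) (hL_lin a b)) f Finset.univ
  have starhalf : (star (1/2 : ℂ)) = (1/2 : ℂ) := by norm_num
  have half_nonneg : ∀ a : 𝔄, 0 ≤ a → 0 ≤ (1/2:ℂ) • a := by
    intro a h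
    have : (1/2:ℂ) • a = (1/2:ℝ) • a := by rw [← Complex.coe_smul]; norm_num
    rw [this]
    exact smul_nonneg (by norm_num) h
  -- per-term expansion of K
  have perterm : ∀ a b (z w : E), ip (K a b z) w
      = (1/2:ℂ) • (ip (L a s₀ z) w + ip (L s₀ b z) w - ip (L a b z) w - ip (L s₀ s₀ z) w) := by
    intro a b z w
    rw [hK, ipsml, starhalf, ipsubl, ipsubl, ipal]
  -- the key identity
  have key : ∀ (n : ℕ) (s : Fin n → S) (x : Fin n → E),
      (∑ i, ∑ j, ip (K (s i) (s j) (x i)) (x j))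
        = (1/2:ℂ) • ((∑ i, ip (L (s i) s₀ (x i)) (∑ j, x j))
            + (∑ j, ip (L s₀ (s j) (∑ i, x i)) (x j))
            - (∑ i, ∑ j, ip (L (s i) (s j) (x i)) (x j))
            - ip (L s₀ s₀ (∑ i, x i)) (∑ j, x j)) := by
    intro n s x
    have hB : ∀ i, ∑ j, ip (L (s i) s₀ (x i)) (x j) = ip (L (s i) s₀ (x i)) (∑ j, x j) :=
      fun i => (ipsr _ _).symm
    have hC : (∑ i, ∑ j, ip (L s₀ (s j) (x i)) (x j))
        = ∑ j, ip (L s₀ (s j) (∑ i, x i)) (x j) := by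
      rw [Finset.sum_comm]
      refine Finset.sum_congr rfl fun j _ => ?_
      rw [Lsum, ipsl]
    have hD : (∑ i, ∑ j, ip (L s₀ s₀ (x i)) (x j))
        = ip (L s₀ s₀ (∑ i, x i)) (∑ j, x j) := by
      rw [Lsum, ipsl]
      exact Finset.sum_congr rfl fun i _ => (ipsr _ _).symm
    calc (∑ i, ∑ j, ip (K (s i) (s j) (x i)) (x j))
        = ∑ i, ∑ j, (1/2:ℂ) • (ip (L (s i) s₀ (x i)) (x j) + ip (L s₀ (s j) (x i)) (x j)
            - ip (L (s i) (s j) (x i)) (x j) - ip (L s₀ s₀ (x i)) (x j)) :=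
          Finset.sum_congr rfl fun i _ => Finset.sum_congr rfl fun j _ => perterm _ _ _ _
      _ = (1/2:ℂ) • ∑ i, ∑ j, (ip (L (s i) s₀ (x i)) (x j) + ip (L s₀ (s j) (x i)) (x j)
            - ip (L (s i) (s j) (x i)) (x j) - ip (L s₀ s₀ (x i)) (x j)) := by
          simp only [← Finset.smul_sum]
      _ = (1/2:ℂ) • ((∑ i, ∑ j, ip (L (s i) s₀ (x i)) (x j))
            + (∑ i, ∑ j, ip (L s₀ (s j) (x i)) (x j))
            - (∑ i, ∑ j, ip (L (s i) (s j) (x i)) (x j))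
            - (∑ i, ∑ j, ip (L s₀ s₀ (x i)) (x j))) := by
          congr 1
          simp only [Finset.sum_sub_distrib, Finset.sum_add_distrib]
      _ = _ := by
          have hB' : (∑ i, ∑ j, ip (L (s i) s₀ (x i)) (x j))
              = ∑ i, ip (L (s i) s₀ (x i)) (∑ j, x j) :=
            Finset.sum_congr rfl fun i _ => hB i
          rw [hB', hC, hD]
  constructor
  · -- CND → PD
    intro hcnd n hn s x
    set T : E := ∑ i, x i with hT
    set Q : 𝔄 := ∑ i, ∑ j, ip (L (s i) (s j) (x i)) (x j) with hQdef
    set B : 𝔄 := ∑ i, ip (L (s i) s₀ (x i)) T with hBdef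
    set C : 𝔄 := ∑ j, ip (L s₀ (s j) T) (x j) with hCdef
    set D : 𝔄 := ip (L s₀ s₀ T) T with hDdef
    have hx' : (∑ i, (Fin.snoc x (-T) : Fin (n+1) → E) i) = 0 := by
      rw [Fin.sum_univ_castSucc]
      simp [Fin.snoc_castSucc, Fin.snoc_last, ← hT]
    have hQ' := hcnd (n+1) (by omega) (Fin.snoc s s₀) (Fin.snoc x (-T)) hx'
    have hsplit : (∑ i, ∑ j, ip (L ((Fin.snoc s s₀ : Fin (n+1) → S) i)
          ((Fin.snoc s s₀ : Fin (n+1) → S) j) ((Fin.snoc x (-T) : Fin (n+1) → E) i))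
          ((Fin.snoc x (-T) : Fin (n+1) → E) j)) = Q - B - C + D := by
      simp only [Fin.sum_univ_castSucc, Fin.snoc_castSucc, Fin.snoc_last]
      simp only [ipnr, Lneg, ipnl, neg_neg, Finset.sum_add_distrib, Finset.sum_neg_distrib]
      rw [hQdef, hBdef, hCdef, hDdef]
      abel
    rw [hsplit] at hQ'
    rw [key n s x]
    have harr : (∑ i, ip (L (s i) s₀ (x i)) (∑ j, x j))
          + (∑ j, ip (L s₀ (s j) (∑ i, x i)) (x j))
          - (∑ i, ∑ j, ip (L (s i) (s j) (x i)) (x j))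
          - ip (L s₀ s₀ (∑ i, x i)) (∑ j, x j) = -(Q - B - C + D) := by
      rw [← hT, ← hQdef, ← hBdef, ← hCdef, ← hDdef]
      abel
    rw [harr]
    exact half_nonneg _ (neg_nonneg.mpr hQ')
  · -- PD → CND
    intro hpd n hn s x hx
    have hk := hpd n hn s x
    rw [key n s x, hx] at hk
    simp only [ip0r, Lzero, ip0l, Finset.sum_const_zero] at hk
    have h2 : (1/2:ℂ) • (∑ i, ∑ j, ip (L (s i) (s j) (x i)) (x j)) ≤ 0 := by
      have : (0:𝔄) + 0 - (∑ i, ∑ j, ip (L (s i) (s j) (x i)) (x j)) - 0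
          = -(∑ i, ∑ j, ip (L (s i) (s j) (x i)) (x j)) := by abel
      rw [this, smul_neg] at hk
      exact neg_nonneg.mp hk
    have heq : (∑ i, ∑ j, ip (L (s i) (s j) (x i)) (x j))
        = (1/2:ℂ) • (∑ i, ∑ j, ip (L (s i) (s j) (x i)) (x j))
          + (1/2:ℂ) • (∑ i, ∑ j, ip (L (s i) (s j) (x i)) (x j)) := by
      rw [← add_smul]; norm_num
    rw [heq]
    exact add_nonpos h2 h2
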